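/- Let A be a symmetric m × m real matrix with trace(A) = mμ and trace(A²) = S. Then the traceless part φ = A - μ·Id satisfies trace(φ²) = S - mμ², and trace(A³) ≥ -((m-2)/√(m(m-1)))(S - mμ²)^{3/2} + 3μ(S - mμ²) + mμ³. -/

import Mathlib

/-!
Write `A = φ + μ • 1`: the traces of `A²` and `A³` expand into those of `φ`, `φ²`, `φ³`, and
`trace φ = 0`. The eigenvalues `x` of the symmetric matrix `φ` sum to zero, so Okumura's
inequality bounds `∑ xᵢ³` from below in terms of `∑ xᵢ²`. That inequality comes from summing
`(xᵢ - a)² (xᵢ - b) ≥ 0`, where by Cauchy–Schwarz `b = -(N - 1) a` is a lower bound for every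
`xᵢ`, and `a` is chosen so that equality holds at `x = (b, a, …, a)`.
-/

open Finset

section Okumura

variable {ι : Type*} [Fintype ι] {x : ι → ℝ}

lemma card_mul_sq_le_of_sum_eq_zero (h0 : ∑ i, x i = 0) (i : ι) :
    Fintype.card ι * x i ^ 2 ≤ (Fintype.card ι - 1) * ∑ j, x j ^ 2 := by
  classical
  have hrest : ∑ j ∈ univ.erase i, x j = -x i := by
    linarith [add_sum_erase univ x (mem_univ i)]
  have hrest_sq : ∑ j ∈ univ.erase i, x j ^ 2 = ∑ j, x j ^ 2 - x i ^ 2 := by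
    linarith [add_sum_erase univ (fun j => x j ^ 2) (mem_univ i)]
  have hcard : ((univ.erase i).card : ℝ) = Fintype.card ι - 1 := by
    rw [card_erase_of_mem (mem_univ i), card_univ, Nat.cast_sub (Fintype.card_pos_iff.2 ⟨i⟩),
      Nat.cast_one]
  have hcs := sq_sum_le_card_mul_sum_sq (s := univ.erase i) (f := x)
  rw [hrest, hrest_sq, hcard] at hcs
  linear_combination hcs

lemma sum_cube_ge_of_forall_ge (h0 : ∑ i, x i = 0) {a b : ℝ} (hb : ∀ i, b ≤ x i) :
    (2 * a + b) * ∑ i, x i ^ 2 + Fintype.card ι * (a ^ 2 * b) ≤ ∑ i, x i ^ 3 := by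
  have hnonneg : 0 ≤ ∑ i, (x i - a) ^ 2 * (x i - b) :=
    sum_nonneg fun i _ => mul_nonneg (sq_nonneg _) (sub_nonneg.2 (hb i))
  have hexpand : ∑ i, (x i - a) ^ 2 * (x i - b) = ∑ i, x i ^ 3 - (2 * a + b) * ∑ i, x i ^ 2
      + (a ^ 2 + 2 * a * b) * ∑ i, x i - Fintype.card ι * (a ^ 2 * b) := by
    rw [sum_congr rfl fun i _ => (by ring : (x i - a) ^ 2 * (x i - b)
      = x i ^ 3 - (2 * a + b) * x i ^ 2 + (a ^ 2 + 2 * a * b) * x i - a ^ 2 * b)]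
    simp only [sum_sub_distrib, sum_add_distrib, ← mul_sum, sum_const, card_univ, nsmul_eq_mul]
    ring
  rw [hexpand, h0] at hnonneg
  linarith

theorem okumura_sum_cube_ge (hN : 2 ≤ Fintype.card ι) (h0 : ∑ i, x i = 0) :
    -((Fintype.card ι - 2) / √(Fintype.card ι * (Fintype.card ι - 1))) * √(∑ i, x i ^ 2) ^ 3
      ≤ ∑ i, x i ^ 3 := by
  have hN2 : (2 : ℝ) ≤ Fintype.card ι := by exact_mod_cast hN
  have hr2 : √(∑ i, x i ^ 2) ^ 2 = ∑ i, x i ^ 2 := Real.sq_sqrt (sum_nonneg fun i _ => sq_nonneg _)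
  set N : ℝ := (Fintype.card ι : ℝ)
  have hc : 0 < √(N * (N - 1)) := Real.sqrt_pos.2 (by nlinarith)
  have hc2 : √(N * (N - 1)) ^ 2 = N * (N - 1) := Real.sq_sqrt (by nlinarith)
  set c := √(N * (N - 1))
  set r := √(∑ i, x i ^ 2)
  have hb : ∀ i, -((N - 1) * r / c) ≤ x i := by
    intro i
    have hsq : x i ^ 2 ≤ ((N - 1) * r / c) ^ 2 := by
      rw [div_pow, le_div_iff₀ (by positivity), mul_pow, hr2, hc2]
      nlinarith [card_mul_sq_le_of_sum_eq_zero h0 i]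
    exact (abs_le_of_sq_le_sq' hsq
      (div_nonneg (mul_nonneg (by linarith) (Real.sqrt_nonneg _)) hc.le)).1
  have key := sum_cube_ge_of_forall_ge h0 (a := r / c) hb
  rw [← hr2] at key
  convert key using 1
  field_simp
  linear_combination (-(r ^ 3)) * hc2

end Okumura

namespace Matrix

theorem IsHermitian.trace_pow_eq_sum_eigenvalues_pow {𝕜 n : Type*} [RCLike 𝕜] [Fintype n]
    [DecidableEq n] {A : Matrix n n 𝕜} (hA : A.IsHermitian) (k : ℕ) :
    (A ^ k).trace = ∑ i, (hA.eigenvalues i : 𝕜) ^ k := by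
  conv_lhs => rw [hA.spectral_theorem, ← map_pow, Unitary.conjStarAlgAut_apply, trace_mul_cycle,
    Unitary.coe_star_mul_self, one_mul, diagonal_pow, trace_diagonal]
  rfl

variable {R n : Type*} [CommRing R] [Fintype n] [DecidableEq n] (φ : Matrix n n R) (μ : R)

lemma trace_add_smul_one_sq :
    ((φ + μ • 1) ^ 2).trace = (φ ^ 2).trace + 2 * μ * φ.trace + Fintype.card n * μ ^ 2 := by
  simp only [sq, mul_add, add_mul, Algebra.smul_mul_assoc, one_mul, Algebra.mul_smul_comm, mul_one,
    smul_add, trace_add, trace_smul, smul_eq_mul, trace_one]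
  ring

lemma trace_add_smul_one_cube :
    ((φ + μ • 1) ^ 3).trace = (φ ^ 3).trace + 3 * μ * (φ ^ 2).trace + 3 * μ ^ 2 * φ.trace
      + Fintype.card n * μ ^ 3 := by
  simp only [pow_succ, pow_zero, mul_add, one_mul, Algebra.mul_smul_comm, mul_one, add_mul,
    Algebra.smul_mul_assoc, smul_add, trace_add, trace_smul, smul_eq_mul, trace_one]
  ring

end Matrix

/-- For a symmetric `m × m` matrix `A` with `trace A = mμ` and `trace(A²) = S`, the traceless
part `φ = A - μ•1` satisfies `trace(φ²) = S - mμ²`, and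
`trace(A³) ≥ -((m-2)/√(m(m-1))) (S - mμ²)^{3/2} + 3μ(S - mμ²) + mμ³`. -/
theorem trace_cube_lower_bound (m : ℕ) (hm : 2 ≤ m) (A : Matrix (Fin m) (Fin m) ℝ)
    (hA : A.IsSymm) (μ S : ℝ) (htr : A.trace = (m : ℝ) * μ) (htr2 : (A ^ 2).trace = S)
    (φ : Matrix (Fin m) (Fin m) ℝ)
    (hφ : φ = A - μ • (1 : Matrix (Fin m) (Fin m) ℝ)) :
    (φ ^ 2).trace = S - (m : ℝ) * μ ^ 2 ∧
      (A ^ 3).trace ≥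
        -(((m : ℝ) - 2) / Real.sqrt ((m : ℝ) * ((m : ℝ) - 1))) *
            Real.sqrt (S - (m : ℝ) * μ ^ 2) ^ 3 +
          3 * μ * (S - (m : ℝ) * μ ^ 2) + (m : ℝ) * μ ^ 3 := by
  have hA_eq : A = φ + μ • 1 := by rw [hφ, sub_add_cancel]
  have hφH : φ.IsHermitian := by
    rw [Matrix.isHermitian_iff_isSymm, hφ]
    exact hA.sub (Matrix.isSymm_one.smul μ)
  have htrφ : φ.trace = 0 := by
    rw [hA_eq, Matrix.trace_add, Matrix.trace_smul, Matrix.trace_one, Fintype.card_fin,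
      smul_eq_mul] at htr
    linarith
  have htrφ2 : (φ ^ 2).trace = S - m * μ ^ 2 := by
    rw [← htr2, hA_eq, Matrix.trace_add_smul_one_sq, htrφ, Fintype.card_fin]
    ring
  refine ⟨htrφ2, ?_⟩
  have hsum : ∑ i, hφH.eigenvalues i = 0 := by
    simpa using hφH.trace_eq_sum_eigenvalues ▸ htrφ
  have hsum_sq : ∑ i, hφH.eigenvalues i ^ 2 = S - m * μ ^ 2 := by
    simpa using (hφH.trace_pow_eq_sum_eigenvalues_pow 2).symm.trans htrφ2
  have hbound := okumura_sum_cube_ge (by simpa using hm) hsum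
  rw [Fintype.card_fin, hsum_sq] at hbound
  rw [hA_eq, Matrix.trace_add_smul_one_cube, htrφ2, htrφ, hφH.trace_pow_eq_sum_eigenvalues_pow,
    Fintype.card_fin]
  simp only [RCLike.ofReal_real_eq_id, id]
  linarith
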